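/- Let a be an irrational real number. Then μ(a) = ν(1,a), i.e. the irrationality exponent of a equals the simultaneous irrationality exponent of the pair (1,a); here both infima may equal +∞, in which case they are equal as extended reals. -/

import Mathlib

/-- The integer lattice `ℤ² ⊂ ℝ²` (Euclidean plane). -/
def intLattice2 : Set (EuclideanSpace ℝ (Fin 2)) :=
  {w | ∀ i, ∃ n : ℤ, w i = (n : ℝ)}

/-- The irrationality exponent
`μ(a) = inf{μ : ∃ C > 0, |a - p/q| > C q^{-μ} for all rationals p/q ≠ a}`,
as an extended real (`inf ∅ = +∞`). -/
noncomputable def irrExp (a : ℝ) : EReal :=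
  sInf ((fun μ : ℝ => (μ : EReal)) ''
    {μ : ℝ | ∃ C : ℝ, 0 < C ∧ ∀ q : ℚ, (q : ℝ) ≠ a →
      C * (q.den : ℝ) ^ (-μ) < |a - (q : ℝ)|})

/-- The simultaneous irrationality exponent
`ν(a₁,a₂) = inf{ν : ∃ C > 0, dist((t a₁, t a₂), ℤ²) > C t^{1-ν} for all t ≥ 1}`,
as an extended real (`inf ∅ = +∞`). -/
noncomputable def simulIrrExp (a₁ a₂ : ℝ) : EReal :=
  sInf ((fun ν : ℝ => (ν : EReal)) ''
    {ν : ℝ | ∃ C : ℝ, 0 < C ∧ ∀ t : ℝ, 1 ≤ t →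
      C * t ^ (1 - ν) < Metric.infDist
        (show EuclideanSpace ℝ (Fin 2) from WithLp.toLp 2 ![t * a₁, t * a₂]) intLattice2})

/-!
Both exponents are infima of sets of admissible exponents, and for irrational `a` these sets
coincide. Evaluating the simultaneous bound at `t = q`, next to the lattice point `(q, p)`, gives
the bound for `p / q` directly. Conversely, a lattice point `(m, p)` either has
`|t - m| ≥ ε t ^ (1 - μ)` or lies within `1/2` of `t`, in which case `m ≤ 2 t` and
`|t a - p| ≥ |m a - p| - |a| |t - m| ≳ m ^ (1 - μ) - |a| ε t ^ (1 - μ) ≳ t ^ (1 - μ)`; comparing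
`m ^ (1 - μ)` with `t ^ (1 - μ)` needs `μ ≥ 1`, which Dirichlet's approximation theorem forces
for irrational `a`.
-/

open Metric

def irrExpSet (a : ℝ) : Set ℝ :=
  {μ | ∃ C : ℝ, 0 < C ∧ ∀ q : ℚ, (q : ℝ) ≠ a → C * (q.den : ℝ) ^ (-μ) < |a - (q : ℝ)|}

def simulIrrExpSet (a₁ a₂ : ℝ) : Set ℝ :=
  {ν | ∃ C : ℝ, 0 < C ∧ ∀ t : ℝ, 1 ≤ t →
    C * t ^ (1 - ν) < infDist
      (show EuclideanSpace ℝ (Fin 2) from WithLp.toLp 2 ![t * a₁, t * a₂]) intLattice2}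

lemma toLp_intCast_mem_intLattice2 (m n : ℤ) :
    (show EuclideanSpace ℝ (Fin 2) from WithLp.toLp 2 ![(m : ℝ), (n : ℝ)]) ∈ intLattice2 := by
  intro i
  fin_cases i
  exacts [⟨m, rfl⟩, ⟨n, rfl⟩]

lemma infDist_intLattice2_le_abs_sub (m : ℤ) (y : ℝ) (n : ℤ) :
    infDist (show EuclideanSpace ℝ (Fin 2) from WithLp.toLp 2 ![(m : ℝ), y]) intLattice2 ≤
      |y - n| := by
  refine (infDist_le_dist_of_mem (toLp_intCast_mem_intLattice2 m n)).trans_eq ?_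
  simp [EuclideanSpace.dist_eq, Real.dist_eq, Real.sqrt_sq_eq_abs]

lemma one_lt_of_mem_irrExpSet {a μ : ℝ} (ha : Irrational a) (hμ : μ ∈ irrExpSet a) : 1 < μ := by
  obtain ⟨C, hC, h⟩ := hμ
  by_contra! hμ1
  obtain ⟨n, hn⟩ := exists_nat_gt (1 / C)
  have hn0 : 0 < n := by exact_mod_cast (one_div_pos.mpr hC).trans hn
  obtain ⟨q, hq, -⟩ := Real.exists_rat_abs_sub_le_and_den_le a hn0
  have hd : (1 : ℝ) ≤ q.den := by exact_mod_cast q.pos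
  have hd0 : (0 : ℝ) < q.den := by positivity
  have hqa : (q : ℝ) ≠ a := fun h => ha ⟨q, h⟩
  have : C < 1 / n := calc
    C ≤ C * (q.den : ℝ) ^ (1 - μ) :=
      le_mul_of_one_le_right hC.le (Real.one_le_rpow hd (by linarith))
    _ = q.den * (C * (q.den : ℝ) ^ (-μ)) := by
      rw [sub_eq_add_neg, Real.rpow_add hd0, Real.rpow_one]; ring
    _ < q.den * |a - q| := by gcongr; exact h q hqa
    _ ≤ q.den * (1 / ((n + 1) * q.den)) := by gcongr
    _ = 1 / (n + 1) := by field_simp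
    _ < 1 / n := by gcongr; linarith
  exact lt_asymm this ((one_div_lt hC (by positivity)).mp hn)

lemma mul_rpow_lt_abs_intCast_mul_sub {a μ C : ℝ} (ha : Irrational a) (hμ : 0 ≤ μ) (hC : 0 ≤ C)
    (h : ∀ q : ℚ, (q : ℝ) ≠ a → C * (q.den : ℝ) ^ (-μ) < |a - q|) (p : ℤ) {q : ℤ} (hq : 0 < q) :
    C * (q : ℝ) ^ (1 - μ) < |q * a - p| := by
  have hq0 : (0 : ℝ) < q := by exact_mod_cast hq
  have hr : ((p / q : ℚ) : ℝ) = p / q := by push_cast; ring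
  have hden : ((p / q : ℚ).den : ℝ) ≤ q := by
    have := Int.le_of_dvd hq (Rat.intCast_div_eq_divInt p q ▸ Rat.den_dvd p q)
    exact_mod_cast this
  calc C * (q : ℝ) ^ (1 - μ) = q * (C * (q : ℝ) ^ (-μ)) := by
        rw [sub_eq_add_neg, Real.rpow_add hq0, Real.rpow_one]; ring
    _ ≤ q * (C * ((p / q : ℚ).den : ℝ) ^ (-μ)) := by
        have hpos : (0 : ℝ) < (p / q : ℚ).den := by exact_mod_cast (p / q : ℚ).pos
        gcongr ?_ * (C * ?_)
        exact Real.rpow_le_rpow_of_nonpos hpos hden (neg_nonpos.mpr hμ)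
    _ < q * |a - (p / q : ℚ)| := by
        gcongr; exact h _ fun h => ha ⟨_, h⟩
    _ = |q * a - p| := by
        rw [hr, ← abs_of_pos hq0, ← abs_mul, abs_of_pos hq0]; congr 1; field_simp

lemma mul_rpow_le_max_abs_sub {a μ C ε t : ℝ} (hμ : 1 ≤ μ) (hC : 0 ≤ C)
    (hint : ∀ p q : ℤ, 0 < q → C * (q : ℝ) ^ (1 - μ) < |q * a - p|)
    (hε : ε ≤ 1 / 2) (hεC : ε * (1 + |a|) ≤ C * 2 ^ (1 - μ)) (ht : 1 ≤ t) (m p : ℤ) :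
    ε * t ^ (1 - μ) ≤ max |t - m| |t * a - p| := by
  set T := t ^ (1 - μ)
  have hT0 : 0 < T := by positivity
  have hT1 : T ≤ 1 := Real.rpow_le_one_of_one_le_of_nonpos ht (by linarith)
  rcases le_or_gt (ε * T) |t - m| with hfar | hnear
  · exact le_max_of_le_left hfar
  refine le_max_of_le_right ?_
  obtain ⟨hm_lo, hm_hi⟩ := abs_lt.mp (hnear.trans_le (by nlinarith : ε * T ≤ 1 / 2))
  have hm0 : (0 : ℝ) < m := by linarith
  have hm : C * 2 ^ (1 - μ) * T ≤ C * (m : ℝ) ^ (1 - μ) := by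
    rw [mul_assoc, ← Real.mul_rpow zero_le_two (by linarith)]
    gcongr C * ?_
    exact Real.rpow_le_rpow_of_nonpos hm0 (by linarith) (by linarith)
  have htri : |(m : ℝ) * a - p| ≤ |t * a - p| + |a| * |t - m| := calc
    |(m : ℝ) * a - p| = |(t * a - p) - a * (t - m)| := by ring_nf
    _ ≤ |t * a - p| + |a * (t - m)| := abs_sub _ _
    _ = |t * a - p| + |a| * |t - m| := by rw [abs_mul]
  have hmq := hint p m (by exact_mod_cast hm0)
  nlinarith [mul_le_mul_of_nonneg_left hnear.le (abs_nonneg a)]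

lemma mem_irrExpSet_of_mem_simulIrrExpSet_one {a ν : ℝ} (hν : ν ∈ simulIrrExpSet 1 a) :
    ν ∈ irrExpSet a := by
  obtain ⟨C, hC, h⟩ := hν
  refine ⟨C, hC, fun q _ => ?_⟩
  have hd0 : (0 : ℝ) < q.den := by exact_mod_cast q.pos
  have hdist := infDist_intLattice2_le_abs_sub q.den (q.den * a) q.num
  rw [Int.cast_natCast] at hdist
  have hlt := h q.den (by exact_mod_cast q.pos)
  rw [mul_one] at hlt
  have hscale : |(q.den : ℝ) * a - q.num| = q.den * |a - q| := by
    rw [← abs_of_pos hd0, ← abs_mul, abs_of_pos hd0, Rat.cast_def]; congr 1; field_simp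
  refine lt_of_mul_lt_mul_left ?_ hd0.le
  calc q.den * (C * (q.den : ℝ) ^ (-ν)) = C * (q.den : ℝ) ^ (1 - ν) := by
        rw [sub_eq_add_neg, Real.rpow_add hd0, Real.rpow_one]; ring
    _ < q.den * |a - q| := hscale ▸ hlt.trans_le hdist

lemma mem_simulIrrExpSet_one_of_mem_irrExpSet {a μ : ℝ} (ha : Irrational a)
    (hμ : μ ∈ irrExpSet a) : μ ∈ simulIrrExpSet 1 a := by
  have hμ1 := one_lt_of_mem_irrExpSet ha hμ
  obtain ⟨C, hC, h⟩ := hμ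
  set ε := min (1 / 2) (C * 2 ^ (1 - μ) / (1 + |a|))
  have hε0 : 0 < ε := by positivity
  have hεC : ε * (1 + |a|) ≤ C * 2 ^ (1 - μ) :=
    (le_div_iff₀ (by positivity)).mp (min_le_right _ _)
  refine ⟨ε / 2, by positivity, fun t ht => ?_⟩
  set x : EuclideanSpace ℝ (Fin 2) := WithLp.toLp 2 ![t * 1, t * a]
  have hbound : ε * t ^ (1 - μ) ≤ infDist x intLattice2 := by
    refine (le_infDist ⟨_, toLp_intCast_mem_intLattice2 0 0⟩).mpr fun w hw => ?_
    obtain ⟨m, hm⟩ := hw 0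
    obtain ⟨p, hp⟩ := hw 1
    refine (mul_rpow_le_max_abs_sub hμ1.le hC.le
      (fun p q hq => mul_rpow_lt_abs_intCast_mul_sub ha (by linarith) hC.le h p hq)
      (min_le_left _ _) hεC ht m p).trans (max_le ?_ ?_)
    · simpa [x, hm, Real.dist_eq] using PiLp.dist_apply_le x w 0
    · simpa [x, hp, Real.dist_eq] using PiLp.dist_apply_le x w 1
  calc ε / 2 * t ^ (1 - μ) < ε * t ^ (1 - μ) := by gcongr; linarith
    _ ≤ _ := hbound

lemma simulIrrExpSet_one_eq_irrExpSet {a : ℝ} (ha : Irrational a) :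
    simulIrrExpSet 1 a = irrExpSet a :=
  Set.Subset.antisymm (fun _ => mem_irrExpSet_of_mem_simulIrrExpSet_one)
    (fun _ => mem_simulIrrExpSet_one_of_mem_irrExpSet ha)

/-- for an irrational real number `a`, the irrationality exponent
of `a` equals the simultaneous irrationality exponent of the pair `(1, a)`. -/
theorem irrExp_eq_simulIrrExp_one (a : ℝ) (ha : Irrational a) :
    irrExp a = simulIrrExp 1 a := by
  change sInf (_ '' irrExpSet a) = sInf (_ '' simulIrrExpSet 1 a)
  rw [simulIrrExpSet_one_eq_irrExpSet ha]
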